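/- arXiv:2009.09440 — 4 statements merged into one kernel-verified Lean document; each statement's English description precedes it below -/
import Mathlib

section
/- Let b ~ N(β, se²) with se > 0. The bias E|b| − |β| is strictly positive for all se > 0 and β ∈ ℝ; moreover, for fixed se it is a decreasing function of |β|, and for fixed β it is an increasing function of se. -/
open MeasureTheory ProbabilityTheory

/-- The Gaussian distribution with mean `m` and standard deviation `s`. -/
noncomputable def gauss (m s : ℝ) : Measure ℝ := gaussianReal m (Real.toNNReal (s ^ 2))

/-- The bias `E|b| − |β|` of `|b|` as an estimator of `|β|`, where `b ~ N(β, se²)`. -/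
noncomputable def bias (β se : ℝ) : ℝ := (∫ x, |x| ∂(gauss β se)) - |β|

open Real in
lemma aux_integrable_abs_std : Integrable (fun x : ℝ => |x|) (gaussianReal 0 1) := by
  rw [gaussianReal_of_var_ne_zero 0 one_ne_zero,
    integrable_withDensity_iff (measurable_gaussianPDF 0 1)
      (Filter.Eventually.of_forall fun x => ENNReal.ofReal_lt_top)]
  have key : Integrable (fun x : ℝ => |x| * rexp (-(2⁻¹) * x ^ 2)) := by
    have h := (integrable_rpow_mul_exp_neg_mul_sq (by norm_num : (0:ℝ) < 2⁻¹)
      (s := 1) (by norm_num)).abs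
    refine h.congr (Filter.Eventually.of_forall fun x => ?_)
    show |x ^ (1:ℝ) * rexp (-(2⁻¹) * x ^ 2)| = _
    rw [Real.rpow_one, abs_mul, abs_of_pos (exp_pos _)]
  refine (key.const_mul ((√(2 * π * 1))⁻¹)).congr
    (Filter.Eventually.of_forall fun x => ?_)
  show (√(2 * π * 1))⁻¹ * (|x| * rexp (-(2⁻¹) * x ^ 2)) = |x| * (gaussianPDF 0 1 x).toReal
  rw [show (gaussianPDF 0 1 x).toReal = gaussianPDFReal 0 1 x from
    ENNReal.toReal_ofReal (gaussianPDFReal_nonneg 0 1 x), gaussianPDFReal]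
  push_cast
  ring_nf

lemma aux_abs_identity (a b : ℝ) : |a + b| + |a - b| = 2 * max |a| |b| := by
  rcases le_total 0 (a + b) with h1 | h1 <;> rcases le_total 0 (a - b) with h2 | h2
  · have ha : 0 ≤ a := by linarith
    have hb : |b| ≤ |a| := by
      rw [abs_of_nonneg ha]; exact abs_le.mpr ⟨by linarith, by linarith⟩
    rw [abs_of_nonneg h1, abs_of_nonneg h2, max_eq_left hb, abs_of_nonneg ha]; ring
  · have hb0 : 0 ≤ b := by linarith
    have hab : |a| ≤ |b| := by
      rw [abs_of_nonneg hb0]; exact abs_le.mpr ⟨by linarith, by linarith⟩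
    rw [abs_of_nonneg h1, abs_of_nonpos h2, max_eq_right hab, abs_of_nonneg hb0]; ring
  · have hb0 : b ≤ 0 := by linarith
    have hab : |a| ≤ |b| := by
      rw [abs_of_nonpos hb0]; exact abs_le.mpr ⟨by linarith, by linarith⟩
    rw [abs_of_nonpos h1, abs_of_nonneg h2, max_eq_right hab, abs_of_nonpos hb0]; ring
  · have ha0 : a ≤ 0 := by linarith
    have hb : |b| ≤ |a| := by
      rw [abs_of_nonpos ha0]; exact abs_le.mpr ⟨by linarith, by linarith⟩
    rw [abs_of_nonpos h1, abs_of_nonpos h2, max_eq_left hb, abs_of_nonpos ha0]; ring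

lemma aux_gauss_map (β se : ℝ) :
    gauss β se = (gaussianReal 0 1).map (fun z => se * z + β) := by
  have h1 : (gaussianReal 0 1).map (se * ·) = gaussianReal 0 (Real.toNNReal (se ^ 2)) := by
    rw [gaussianReal_map_const_mul, mul_zero]
    congr 1
    ext
    simp [Real.toNNReal, max_eq_left (sq_nonneg se)]
  have h2 : (fun z : ℝ => se * z + β) = (· + β) ∘ (se * ·) := rfl
  rw [gauss, h2, ← Measure.map_map (measurable_add_const β) (measurable_const_mul se),
    h1, gaussianReal_map_add_const, zero_add]

lemma aux_std_neg :
    (gaussianReal 0 1).map (Neg.neg : ℝ → ℝ) = gaussianReal 0 1 := by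
  have : (Neg.neg : ℝ → ℝ) = ((-1 : ℝ) * ·) := by funext z; ring
  rw [this, gaussianReal_map_const_mul]
  norm_num

lemma aux_integrable_max (se t : ℝ) (hse : 0 < se) (ht : 0 ≤ t) :
    Integrable (fun z : ℝ => max (se * |z| - t) 0) (gaussianReal 0 1) := by
  refine (aux_integrable_abs_std.const_mul se).mono' ?_
    (Filter.Eventually.of_forall fun z => ?_)
  · exact ((measurable_const.mul measurable_abs).sub measurable_const).max
      measurable_const |>.aestronglyMeasurable
  · rw [Real.norm_eq_abs, abs_of_nonneg (le_max_right _ _)]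
    have h0 : 0 ≤ se * |z| := mul_nonneg hse.le (abs_nonneg z)
    exact max_le (by linarith) h0

lemma aux_bias_eq (β se : ℝ) (hse : 0 < se) :
    bias β se = ∫ z, max (se * |z| - |β|) 0 ∂(gaussianReal 0 1) := by
  set G := gaussianReal 0 1 with hG
  have hmeas : ∀ c : ℝ, Integrable (fun z : ℝ => |se * z + c|) G := by
    intro c
    refine ((aux_integrable_abs_std.const_mul se).add (integrable_const |c|)).mono'
      (((measurable_const_mul se).add_const c).abs.aestronglyMeasurable)
      (Filter.Eventually.of_forall fun z => ?_)
    rw [Real.norm_eq_abs, abs_abs]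
    calc |se * z + c| ≤ |se * z| + |c| := abs_add_le _ _
      _ = se * |z| + |c| := by rw [abs_mul, abs_of_pos hse]
  have hint' : Integrable (fun z : ℝ => |se * z - β|) G :=
    (hmeas (-β)).congr (Filter.Eventually.of_forall fun z => by
      show |se * z + -β| = |se * z - β|
      rw [← sub_eq_add_neg])
  have h1 : (∫ x, |x| ∂(gauss β se)) = ∫ z, |se * z + β| ∂G := by
    rw [aux_gauss_map β se]
    exact integral_map ((measurable_const_mul se).add_const β).aemeasurable
      measurable_abs.aestronglyMeasurable
  have h2 : (∫ z, |se * z + β| ∂G) = ∫ z, |se * z - β| ∂G := by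
    conv_lhs => rw [hG, ← aux_std_neg]
    rw [integral_map measurable_neg.aemeasurable
      (((measurable_const_mul se).add_const β).abs.aestronglyMeasurable)]
    congr 1 with z
    show |se * -z + β| = |se * z - β|
    rw [show se * -z + β = -(se * z - β) by ring, abs_neg]
  have hsum : ∀ z : ℝ, |se * z + β| + |se * z - β| = 2 * max (se * |z|) |β| := by
    intro z
    have h := aux_abs_identity (se * z) β
    rwa [abs_mul, abs_of_pos hse] at h
  have h3 : (∫ z, |se * z + β| ∂G) = ∫ z, max (se * |z|) |β| ∂G := by
    have hadd : (∫ z, |se * z + β| ∂G) + ∫ z, |se * z - β| ∂G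
        = ∫ z, 2 * max (se * |z|) |β| ∂G := by
      rw [← integral_add (hmeas β) hint']
      congr 1 with z
      exact hsum z
    rw [integral_const_mul, ← h2] at hadd
    linarith
  have h4 : (∫ z, max (se * |z|) |β| ∂G)
      = (∫ z, max (se * |z| - |β|) 0 ∂G) + |β| := by
    have hpt : (∀ z : ℝ, max (se * |z|) |β| = max (se * |z| - |β|) 0 + |β|) := by
      intro z
      rcases le_total (se * |z|) |β| with h | h
      · rw [max_eq_right h, max_eq_right (by linarith), zero_add]
      · rw [max_eq_left h, max_eq_left (by linarith)]
        ring
    calc (∫ z, max (se * |z|) |β| ∂G)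
        = ∫ z, (max (se * |z| - |β|) 0 + |β|) ∂G := by congr 1 with z; exact hpt z
      _ = (∫ z, max (se * |z| - |β|) 0 ∂G) + ∫ _, |β| ∂G :=
          integral_add (aux_integrable_max se |β| hse (abs_nonneg β)) (integrable_const _)
      _ = (∫ z, max (se * |z| - |β|) 0 ∂G) + |β| := by
          rw [integral_const]
          simp [hG]
  rw [bias, h1, h3, h4]
  ring

lemma aux_std_pos_Ioi (c : ℝ) : 0 < (gaussianReal 0 1) (Set.Ioi c) := by
  rw [pos_iff_ne_zero]
  intro h
  have h2 := (gaussianReal_absolutelyContinuous' 0 one_ne_zero) h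
  rw [Real.volume_Ioi] at h2
  simp at h2

/-- For `b ~ N(β, se²)` with `se > 0`, the bias `E|b| − |β|` is strictly positive;
for fixed `se` it is a decreasing function of `|β|`, and for fixed `β` it is an
increasing function of `se`. -/
theorem bias_pos_antitone_in_abs_beta_monotone_in_se :
    (∀ β se : ℝ, 0 < se → 0 < bias β se) ∧
    (∀ se : ℝ, 0 < se → ∀ β₁ β₂ : ℝ, |β₁| ≤ |β₂| → bias β₂ se ≤ bias β₁ se) ∧
    (∀ β : ℝ, ∀ se₁ se₂ : ℝ, 0 < se₁ → se₁ ≤ se₂ → bias β se₁ ≤ bias β se₂) := by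
  refine ⟨?_, ?_, ?_⟩
  · intro β se hse
    rw [aux_bias_eq β se hse]
    refine (integral_pos_iff_support_of_nonneg_ae
      (f := fun z : ℝ => max (se * |z| - |β|) 0)
      (Filter.Eventually.of_forall fun z => le_max_right _ _)
      (aux_integrable_max se |β| hse (abs_nonneg β))).mpr ?_
    refine lt_of_lt_of_le (aux_std_pos_Ioi (|β| / se)) (measure_mono ?_)
    intro z hz
    have hz' : |β| < se * z := (div_lt_iff₀' hse).mp hz
    have hz2 : z ≤ |z| := le_abs_self z
    have hpos : 0 < se * |z| - |β| := by nlinarith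
    simp only [Function.mem_support]
    rw [max_eq_left hpos.le]
    exact ne_of_gt hpos
  · intro se hse β₁ β₂ hβ
    rw [aux_bias_eq β₁ se hse, aux_bias_eq β₂ se hse]
    refine integral_mono (aux_integrable_max se |β₂| hse (abs_nonneg β₂))
      (aux_integrable_max se |β₁| hse (abs_nonneg β₁)) fun z => ?_
    exact max_le_max (by linarith) le_rfl
  · intro β se₁ se₂ hse₁ hse₂
    have hse₂' : 0 < se₂ := lt_of_lt_of_le hse₁ hse₂
    rw [aux_bias_eq β se₁ hse₁, aux_bias_eq β se₂ hse₂']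
    refine integral_mono (aux_integrable_max se₁ |β| hse₁ (abs_nonneg β))
      (aux_integrable_max se₂ |β| hse₂' (abs_nonneg β)) fun z => ?_
    have : se₁ * |z| ≤ se₂ * |z| := mul_le_mul_of_nonneg_right hse₂ (abs_nonneg z)
    exact max_le_max (by linarith) le_rfl
end

section
/- Let Z be a standard normal random variable, θ ≥ 0, and define g(θ, c) = E(|θ + Z| − θ ∣ |θ + Z| ≥ c) for c > 0. Then for fixed θ ≥ 0, g(θ, c) is an increasing function of c on (0, ∞). -/
/-!
`g θ c` is the average of `f x = |θ + x| - θ` over the superlevel set `{c - θ ≤ f}`. Raising the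
level from `a` to `b` removes the slab `{a ≤ f < b}`, on which `f < b`, while `f ≥ b` on what
remains; so the removed part pulls the average down and the average over `{b ≤ f}` is larger.
-/

open MeasureTheory ProbabilityTheory

/-- The standard normal distribution. -/
noncomputable def stdNormal : Measure ℝ := gaussianReal 0 1

/-- `g(θ, c) = E(|θ + Z| − θ ∣ |θ + Z| ≥ c)` for `Z` standard normal, where
`E(X ∣ A) = E(X·1_A)/P(A)`. -/
noncomputable def g (θ c : ℝ) : ℝ :=
  (∫ x in {x : ℝ | c ≤ |θ + x|}, (|θ + x| - θ) ∂stdNormal)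
    / (stdNormal {x : ℝ | c ≤ |θ + x|}).toReal

section SuperlevelAverage

variable {α : Type*} [MeasurableSpace α] {μ : Measure α} [IsFiniteMeasure μ] {f : α → ℝ}

lemma setIntegral_le_mul_measureReal {s : Set α} {b : ℝ} (hs : MeasurableSet s)
    (hf : IntegrableOn f s μ) (hfb : ∀ x ∈ s, f x ≤ b) :
    ∫ x in s, f x ∂μ ≤ b * μ.real s := by
  calc ∫ x in s, f x ∂μ ≤ ∫ x in s, b ∂μ := setIntegral_mono_on hf integrableOn_const hs hfb
    _ = b * μ.real s := by rw [setIntegral_const, smul_eq_mul, mul_comm]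

theorem setAverage_superlevel_mono (hfm : Measurable f) (hfi : Integrable f μ) {a b : ℝ}
    (hab : a ≤ b) (hb : μ {x | b ≤ f x} ≠ 0) :
    ⨍ x in {x | a ≤ f x}, f x ∂μ ≤ ⨍ x in {x | b ≤ f x}, f x ∂μ := by
  set A := {x | a ≤ f x} \ {x | b ≤ f x}
  set B := {x | b ≤ f x}
  have hBm : MeasurableSet B := measurableSet_le measurable_const hfm
  have hAm : MeasurableSet A := (measurableSet_le measurable_const hfm).diff hBm
  have hsplit : {x | a ≤ f x} = A ∪ B :=
    (Set.sdiff_union_of_subset fun x (hx : b ≤ f x) => hab.trans hx).symm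
  have hdisj : Disjoint A B := Set.disjoint_sdiff_left
  have hA : ∫ x in A, f x ∂μ ≤ b * μ.real A :=
    setIntegral_le_mul_measureReal hAm hfi.integrableOn fun x hx => (not_le.1 hx.2).le
  have hB : b * μ.real B ≤ ∫ x in B, f x ∂μ :=
    setIntegral_ge_of_const_le_real hBm (measure_ne_top _ _) (fun x hx => hx) hfi.integrableOn
  have hBpos : 0 < μ.real B := ENNReal.toReal_pos hb (measure_ne_top _ _)
  have hApos : 0 ≤ μ.real A := measureReal_nonneg
  rw [setAverage_eq, setAverage_eq, hsplit, setIntegral_union hdisj hBm hfi.integrableOn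
    hfi.integrableOn, measureReal_union hdisj hBm, smul_eq_mul, smul_eq_mul,
    inv_mul_eq_div, inv_mul_eq_div, div_le_div_iff₀ (by positivity) hBpos]
  nlinarith [mul_le_mul_of_nonneg_right hA hBpos.le, mul_le_mul_of_nonneg_right hB hApos]

end SuperlevelAverage

instance : IsProbabilityMeasure stdNormal := by
  unfold stdNormal; infer_instance

lemma integrable_abs_add_sub (θ : ℝ) : Integrable (fun x => |θ + x| - θ) stdNormal := by
  have hid : Integrable id stdNormal := memLp_one_iff_integrable.1 (memLp_id_gaussianReal 1)
  exact ((integrable_const θ).add hid).abs.sub (integrable_const θ)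

lemma stdNormal_abs_add_ge_ne_zero (θ c : ℝ) : stdNormal {x | c ≤ |θ + x|} ≠ 0 := by
  intro h
  have hsub : Set.Ici (c - θ) ⊆ {x | c ≤ |θ + x|} := fun x (hx : c - θ ≤ x) =>
    (by linarith : c ≤ θ + x).trans (le_abs_self _)
  have := measure_mono_null hsub (gaussianReal_absolutelyContinuous' 0 one_ne_zero h)
  simp at this

lemma g_eq_setAverage (θ c : ℝ) :
    g θ c = ⨍ x in {x | c - θ ≤ |θ + x| - θ}, (|θ + x| - θ) ∂stdNormal := by
  simp only [sub_le_sub_iff_right, setAverage_eq, smul_eq_mul, g, Measure.real]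
  rw [div_eq_inv_mul]

theorem g_monotone_in_c_general (θ : ℝ) :
    MonotoneOn (fun c => g θ c) (Set.Ioi (0 : ℝ)) := by
  intro c₁ _ c₂ _ h
  simp only [g_eq_setAverage]
  refine setAverage_superlevel_mono (f := fun x => |θ + x| - θ)
    ((measurable_const.add measurable_id).abs.sub measurable_const) (integrable_abs_add_sub θ)
    (sub_le_sub_right h θ) ?_
  simpa only [sub_le_sub_iff_right] using stdNormal_abs_add_ge_ne_zero θ c₂

/-- For fixed `θ ≥ 0`, `g(θ, c)` is an increasing function of `c` on `(0, ∞)`. -/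
theorem g_monotone_in_c (θ : ℝ) (hθ : 0 ≤ θ) :
    MonotoneOn (fun c => g θ c) (Set.Ioi (0 : ℝ)) :=
  g_monotone_in_c_general θ
end

section
/- Let Z be a standard normal random variable and define g(θ, c) = E(|θ + Z| − θ ∣ |θ + Z| ≥ c) for θ ≥ 0 and c > 0. Then for fixed c > 0, g(θ, c) is a decreasing function of θ on [0, ∞), and g(θ, c) > 0 for all θ ≥ 0. -/
open MeasureTheory ProbabilityTheory

/-!
Write `φ` for the standard normal density and `T x = ∫_x^∞ φ` for its upper tail. Splitting
`{|θ + x| ≥ c}` into `x ≤ -(c + θ)` and `x ≥ c - θ` and using `φ' = -x φ` gives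
`g(θ, c) = N(θ) / D(θ)` with `N = φ(c - θ) + φ(c + θ) - 2θ T(c + θ)` and
`D = T(c - θ) + T(c + θ)`. Everything then follows from the Mills ratio inequality
`x T(x) ≤ φ(x)`: with `a = c - θ`, `b = c + θ`,
`N' D - N D' = (φ a - φ b) (a T a - φ a) + (φ a - φ b) (b T b - φ b) - 2 T b (T a + T b)`,
which is negative since `φ a ≥ φ b` for `θ ≥ 0`; and `N > 0` because
`2θ T b = b T b + (θ - c) T b` with `(θ - c) T b < φ a` as `θ - c < b`.
-/

open Real Set Filter Topology

local notation "φ" => gaussianPDFReal 0 1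

lemma gaussianPDFReal_zero_one_apply (x : ℝ) : φ x = (√(2 * π))⁻¹ * rexp (-x ^ 2 / 2) := by
  simp [gaussianPDFReal]

lemma gaussianPDFReal_zero_one_neg (x : ℝ) : φ (-x) = φ x := by
  simp [gaussianPDFReal_zero_one_apply]

lemma gaussianPDFReal_zero_one_le_of_abs_le {x y : ℝ} (h : |x| ≤ |y|) : φ y ≤ φ x := by
  rw [gaussianPDFReal_zero_one_apply, gaussianPDFReal_zero_one_apply]
  have : x ^ 2 ≤ y ^ 2 := sq_le_sq.mpr h
  gcongr

lemma hasDerivAt_gaussianPDFReal_zero_one (x : ℝ) : HasDerivAt φ (-x * φ x) x := by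
  have hsq : HasDerivAt (fun y : ℝ ↦ -y ^ 2 / 2) (-x) x :=
    ((hasDerivAt_pow 2 x).neg.div_const 2).congr_deriv (by ring)
  rw [funext gaussianPDFReal_zero_one_apply]
  exact (hsq.exp.const_mul _).congr_deriv (by ring)

lemma integrable_mul_gaussianPDFReal_zero_one : Integrable fun x ↦ x * φ x := by
  refine ((integrable_mul_exp_neg_mul_sq (by norm_num : (0 : ℝ) < 1 / 2)).const_mul
    (√(2 * π))⁻¹).congr (ae_of_all _ fun x ↦ ?_)
  simp only [gaussianPDFReal_zero_one_apply]
  ring_nf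

lemma tendsto_gaussianPDFReal_zero_one_atTop : Tendsto φ atTop (𝓝 0) := by
  have h := (tendsto_exp_neg_atTop_nhds_zero.comp
    ((tendsto_pow_atTop two_ne_zero).atTop_div_const two_pos)).const_mul (√(2 * π))⁻¹
  rw [mul_zero] at h
  refine h.congr fun x ↦ ?_
  simp [gaussianPDFReal_zero_one_apply, neg_div]

lemma integral_Ioi_mul_gaussianPDFReal_zero_one (a : ℝ) : ∫ t in Ioi a, t * φ t = φ a := by
  have h := integral_Ioi_of_hasDerivAt_of_tendsto' (a := a)
    (fun x _ ↦ (hasDerivAt_gaussianPDFReal_zero_one x).neg)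
    (by simpa using integrable_mul_gaussianPDFReal_zero_one.integrableOn)
    tendsto_gaussianPDFReal_zero_one_atTop.neg
  simpa using h

noncomputable def stdNormalTail (x : ℝ) : ℝ := ∫ t in Ioi x, φ t

lemma stdNormalTail_eq_integral_Ioc_add {a b : ℝ} (hab : a ≤ b) :
    stdNormalTail a = (∫ t in Ioc a b, φ t) + stdNormalTail b := by
  rw [stdNormalTail, stdNormalTail,
    ← setIntegral_union (Ioc_disjoint_Ioi le_rfl) measurableSet_Ioi
    (integrable_gaussianPDFReal 0 1).integrableOn (integrable_gaussianPDFReal 0 1).integrableOn,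
    Ioc_union_Ioi_eq_Ioi hab]

lemma integral_Ioc_gaussianPDFReal_zero_one_pos {a b : ℝ} (hab : a < b) :
    0 < ∫ t in Ioc a b, φ t := by
  rw [setIntegral_pos_iff_support_of_nonneg_ae (ae_of_all _ (gaussianPDFReal_nonneg 0 1))
    (integrable_gaussianPDFReal 0 1).integrableOn]
  have : Function.support φ = univ :=
    Function.support_eq_univ fun x ↦ (gaussianPDFReal_pos 0 1 x one_ne_zero).ne'
  simpa [this] using hab

lemma stdNormalTail_strictAnti : StrictAnti stdNormalTail := fun a b hab ↦ by
  linarith [stdNormalTail_eq_integral_Ioc_add hab.le,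
    integral_Ioc_gaussianPDFReal_zero_one_pos hab]

lemma stdNormalTail_pos (x : ℝ) : 0 < stdNormalTail x :=
  (setIntegral_nonneg measurableSet_Ioi fun t _ ↦ gaussianPDFReal_nonneg 0 1 t).trans_lt
    (stdNormalTail_strictAnti (lt_add_one x))

/-- The Mills ratio inequality. -/
lemma mul_stdNormalTail_le (x : ℝ) : x * stdNormalTail x ≤ φ x := by
  rcases le_or_gt x 0 with hx | hx
  · exact (mul_nonpos_of_nonpos_of_nonneg hx (stdNormalTail_pos x).le).trans
      (gaussianPDFReal_nonneg 0 1 x)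
  · rw [stdNormalTail, ← integral_const_mul, ← integral_Ioi_mul_gaussianPDFReal_zero_one x]
    refine setIntegral_mono_on ((integrable_gaussianPDFReal 0 1).integrableOn.const_mul x)
      integrable_mul_gaussianPDFReal_zero_one.integrableOn measurableSet_Ioi fun t ht ↦ ?_
    exact mul_le_mul_of_nonneg_right (le_of_lt ht) (gaussianPDFReal_nonneg 0 1 t)

lemma mul_stdNormalTail_lt_of_lt {x y : ℝ} (hxy : x < y) : x * stdNormalTail y < φ x := by
  rcases le_or_gt x 0 with hx | hx
  · exact (mul_nonpos_of_nonpos_of_nonneg hx (stdNormalTail_pos y).le).trans_lt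
      (gaussianPDFReal_pos 0 1 x one_ne_zero)
  · exact (mul_lt_mul_of_pos_left (stdNormalTail_strictAnti hxy) hx).trans_le
      (mul_stdNormalTail_le x)

lemma hasDerivAt_stdNormalTail (x : ℝ) : HasDerivAt stdNormalTail (-φ x) x := by
  have htail : stdNormalTail = fun y ↦ stdNormalTail 0 - ∫ t in (0 : ℝ)..y, φ t := by
    funext y
    rcases le_total 0 y with h | h
    · rw [intervalIntegral.integral_of_le h, stdNormalTail_eq_integral_Ioc_add h]
      ring
    · rw [intervalIntegral.integral_symm, intervalIntegral.integral_of_le h,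
        stdNormalTail_eq_integral_Ioc_add h]
      ring
  have hcont : Continuous φ := continuous_iff_continuousAt.mpr fun y ↦
    (hasDerivAt_gaussianPDFReal_zero_one y).continuousAt
  rw [htail]
  exact (intervalIntegral.integral_hasDerivAt_right
    (integrable_gaussianPDFReal 0 1).intervalIntegrable
    (hcont.stronglyMeasurableAtFilter _ _) hcont.continuousAt).const_sub _

lemma setIntegral_stdNormal (f : ℝ → ℝ) {s : Set ℝ} (hs : MeasurableSet s) :
    ∫ x in s, f x ∂stdNormal = ∫ x in s, φ x * f x := by
  rw [← integral_indicator hs, ← integral_indicator hs, stdNormal,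
    integral_gaussianReal_eq_integral_smul one_ne_zero]
  congr 1 with x
  by_cases hx : x ∈ s <;> simp [hx]

lemma setOf_le_abs_add (c θ : ℝ) :
    {x : ℝ | c ≤ |θ + x|} = Iic (-(c + θ)) ∪ Ici (c - θ) := by
  ext x
  simp only [mem_ofPred_eq, le_abs, mem_union, mem_Iic, mem_Ici]
  constructor <;> rintro (h | h) <;> [right; left; right; left] <;> linarith

lemma disjoint_Iic_neg_add_Ici_sub {c : ℝ} (hc : 0 < c) (θ : ℝ) :
    Disjoint (Iic (-(c + θ))) (Ici (c - θ)) :=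
  Iic_disjoint_Ici.mpr (by linarith)

noncomputable def gNumer (c θ : ℝ) : ℝ :=
  φ (c - θ) + φ (c + θ) - 2 * θ * stdNormalTail (c + θ)

noncomputable def gDenom (c θ : ℝ) : ℝ := stdNormalTail (c - θ) + stdNormalTail (c + θ)

lemma measurableSet_setOf_le_abs_add (c θ : ℝ) : MeasurableSet {x : ℝ | c ≤ |θ + x|} := by
  rw [setOf_le_abs_add]
  exact measurableSet_Iic.union measurableSet_Ici

lemma stdNormal_setOf_le_abs_add {c : ℝ} (hc : 0 < c) (θ : ℝ) :
    (stdNormal {x : ℝ | c ≤ |θ + x|}).toReal = gDenom c θ := by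
  have h := setIntegral_stdNormal (fun _ ↦ 1) (measurableSet_setOf_le_abs_add c θ)
  simp only [setIntegral_const, smul_eq_mul, mul_one] at h
  rw [← measureReal_def, h, setOf_le_abs_add,
    setIntegral_union (disjoint_Iic_neg_add_Ici_sub hc θ) measurableSet_Ici
    (integrable_gaussianPDFReal 0 1).integrableOn
    (integrable_gaussianPDFReal 0 1).integrableOn, ← integral_comp_neg_Ioi,
    integral_Ici_eq_integral_Ioi, gDenom, stdNormalTail, stdNormalTail, add_comm]
  simp only [gaussianPDFReal_zero_one_neg]

lemma setIntegral_stdNormal_abs_add_sub {c : ℝ} (hc : 0 < c) (θ : ℝ) :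
    ∫ x in {x : ℝ | c ≤ |θ + x|}, (|θ + x| - θ) ∂stdNormal = gNumer c θ := by
  have hint : Integrable fun x ↦ φ x * (|θ + x| - θ) := by
    refine (((integrable_gaussianPDFReal 0 1).const_mul θ).add
      integrable_mul_gaussianPDFReal_zero_one).abs.sub
      ((integrable_gaussianPDFReal 0 1).mul_const θ) |>.congr (ae_of_all _ fun x ↦ ?_)
    simp only [Pi.add_apply, Pi.sub_apply]
    rw [← add_mul, abs_mul, abs_of_nonneg (gaussianPDFReal_nonneg 0 1 x)]
    ring
  have hright : ∫ x in Ici (c - θ), φ x * (|θ + x| - θ) = φ (c - θ) := by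
    rw [integral_Ici_eq_integral_Ioi, ← integral_Ioi_mul_gaussianPDFReal_zero_one]
    refine setIntegral_congr_fun measurableSet_Ioi fun x hx ↦ ?_
    rw [abs_of_pos (by linarith [mem_Ioi.mp hx])]
    ring
  have hleft : ∫ x in Iic (-(c + θ)), φ x * (|θ + x| - θ) =
      φ (c + θ) - 2 * θ * stdNormalTail (c + θ) := by
    have hsplit : EqOn (fun x ↦ φ (-x) * (|θ + -x| - θ)) (fun x ↦ x * φ x - 2 * θ * φ x)
        (Ioi (c + θ)) := fun x hx ↦ by
      dsimp only
      rw [gaussianPDFReal_zero_one_neg, abs_of_neg (by linarith [mem_Ioi.mp hx])]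
      ring
    rw [← integral_comp_neg_Ioi, setIntegral_congr_fun measurableSet_Ioi hsplit,
      integral_sub integrable_mul_gaussianPDFReal_zero_one.integrableOn
        ((integrable_gaussianPDFReal 0 1).const_mul _).integrableOn,
      integral_Ioi_mul_gaussianPDFReal_zero_one, integral_const_mul, stdNormalTail]
  rw [setIntegral_stdNormal _ (measurableSet_setOf_le_abs_add c θ), setOf_le_abs_add,
    setIntegral_union (disjoint_Iic_neg_add_Ici_sub hc θ) measurableSet_Ici hint.integrableOn
    hint.integrableOn, hleft, hright, gNumer]
  ring

lemma hasDerivAt_gNumer (c θ : ℝ) :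
    HasDerivAt (gNumer c)
      ((c - θ) * (φ (c - θ) - φ (c + θ)) - 2 * stdNormalTail (c + θ)) θ := by
  have hA := (hasDerivAt_gaussianPDFReal_zero_one (c - θ)).comp_const_sub c θ
  have hB := (hasDerivAt_gaussianPDFReal_zero_one (c + θ)).comp_const_add c θ
  have hU := (hasDerivAt_stdNormalTail (c + θ)).comp_const_add c θ
  exact ((hA.add hB).sub (((hasDerivAt_id' θ).const_mul 2).mul hU)).congr_deriv (by ring)

lemma hasDerivAt_gDenom (c θ : ℝ) : HasDerivAt (gDenom c) (φ (c - θ) - φ (c + θ)) θ := by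
  have hS := (hasDerivAt_stdNormalTail (c - θ)).comp_const_sub c θ
  have hU := (hasDerivAt_stdNormalTail (c + θ)).comp_const_add c θ
  exact (hS.add hU).congr_deriv (by ring)

lemma gDenom_pos (c θ : ℝ) : 0 < gDenom c θ :=
  add_pos (stdNormalTail_pos _) (stdNormalTail_pos _)

lemma gNumer_pos {c : ℝ} (hc : 0 < c) (θ : ℝ) : 0 < gNumer c θ := by
  have hb := mul_stdNormalTail_le (c + θ)
  have ha : (θ - c) * stdNormalTail (c + θ) < φ (c - θ) := by
    rw [← gaussianPDFReal_zero_one_neg, neg_sub]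
    exact mul_stdNormalTail_lt_of_lt (by linarith)
  rw [gNumer]
  linarith

lemma deriv_gNumer_mul_gDenom_sub_nonpos {c θ : ℝ} (hc : 0 ≤ c) (hθ : 0 ≤ θ) :
    ((c - θ) * (φ (c - θ) - φ (c + θ)) - 2 * stdNormalTail (c + θ)) * gDenom c θ
      - gNumer c θ * (φ (c - θ) - φ (c + θ)) ≤ 0 := by
  have hΔ : 0 ≤ φ (c - θ) - φ (c + θ) := by
    refine sub_nonneg.mpr (gaussianPDFReal_zero_one_le_of_abs_le ?_)
    rw [abs_of_nonneg (add_nonneg hc hθ)]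
    exact abs_sub_le_iff.mpr ⟨by linarith, by linarith⟩
  have hUD := mul_pos (stdNormalTail_pos (c + θ)) (gDenom_pos c θ)
  have ha := mul_nonpos_of_nonneg_of_nonpos hΔ (sub_nonpos.mpr (mul_stdNormalTail_le (c - θ)))
  have hb := mul_nonpos_of_nonneg_of_nonpos hΔ (sub_nonpos.mpr (mul_stdNormalTail_le (c + θ)))
  calc _ = (φ (c - θ) - φ (c + θ)) * ((c - θ) * stdNormalTail (c - θ) - φ (c - θ))
        + (φ (c - θ) - φ (c + θ)) * ((c + θ) * stdNormalTail (c + θ) - φ (c + θ))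
        - 2 * stdNormalTail (c + θ) * gDenom c θ := by
          rw [gNumer, gDenom]; ring
    _ ≤ 0 := by linarith

lemma g_eq_gNumer_div_gDenom {c : ℝ} (hc : 0 < c) (θ : ℝ) :
    g θ c = gNumer c θ / gDenom c θ := by
  rw [g, setIntegral_stdNormal_abs_add_sub hc, stdNormal_setOf_le_abs_add hc]

/-- For fixed `c > 0`, `g(θ, c)` is a decreasing function of `θ` on `[0, ∞)`,
and `g(θ, c) > 0` for all `θ ≥ 0`. -/
theorem g_antitone_in_theta_and_pos (c : ℝ) (hc : 0 < c) :
    AntitoneOn (fun θ => g θ c) (Set.Ici (0 : ℝ)) ∧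
    (∀ θ : ℝ, 0 ≤ θ → 0 < g θ c) := by
  simp only [g_eq_gNumer_div_gDenom hc]
  have hquot (θ : ℝ) :=
    (hasDerivAt_gNumer c θ).div (hasDerivAt_gDenom c θ) (gDenom_pos c θ).ne'
  refine ⟨antitoneOn_of_hasDerivWithinAt_nonpos (convex_Ici 0)
    (fun θ _ ↦ (hquot θ).continuousAt.continuousWithinAt)
    (fun θ _ ↦ (hquot θ).hasDerivWithinAt) fun θ hθ ↦ ?_,
    fun θ _ ↦ div_pos (gNumer_pos hc θ) (gDenom_pos c θ)⟩
  rw [interior_Ici] at hθ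
  exact div_nonpos_of_nonpos_of_nonneg
    (deriv_gNumer_mul_gDenom_sub_nonpos hc.le (le_of_lt hθ)) (sq_nonneg _)
end

section
/- Suppose β ~ N(0, τ²) with τ > 0 and, conditionally on β, b ~ N(β, se²) with se > 0; let b* = τ²·b/(se² + τ²). Then E(|b| − |β|) > E(|β| − |b*|), where the expectations are over the joint distribution of (β, b). -/
/-!
By scaling, `E|X| = σ·c` for `X ~ N(0, σ²)`, where `c = E|Z| > 0` for a standard normal `Z`.
Since `b = β + ε ~ N(0, s²)` with `s² = τ² + se²`, we get `E|β| = cτ`, `E|b| = cs` and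
`E|b*| = (τ²/s²)·cs = cτ²/s`. The claim `cτ - cτ²/s < cs - cτ` is then `c(s - τ)²/s > 0`.
-/

open MeasureTheory ProbabilityTheory
open scoped NNReal

namespace ProbabilityTheory

lemma gaussianReal_zero_eq_map_stdGaussian (v : ℝ≥0) :
    gaussianReal 0 v = (gaussianReal 0 1).map ((NNReal.sqrt v : ℝ) * ·) := by
  rw [gaussianReal_map_const_mul, mul_zero, mul_one]
  congr
  ext
  simp

lemma integral_abs_gaussianReal_zero (v : ℝ≥0) :
    ∫ x, |x| ∂gaussianReal 0 v = NNReal.sqrt v * ∫ x, |x| ∂gaussianReal 0 1 := by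
  rw [gaussianReal_zero_eq_map_stdGaussian v, integral_map (by fun_prop) (by fun_prop),
    ← integral_const_mul]
  simp [abs_mul, abs_of_nonneg (Real.sqrt_nonneg _)]

lemma integrable_abs_gaussianReal (μ : ℝ) (v : ℝ≥0) :
    Integrable (fun x ↦ |x|) (gaussianReal μ v) :=
  (memLp_one_iff_integrable.mp (memLp_id_gaussianReal 1)).abs

lemma integral_abs_stdGaussian_pos : 0 < ∫ x, |x| ∂gaussianReal 0 1 := by
  rw [integral_pos_iff_support_of_nonneg (fun x ↦ abs_nonneg x) (integrable_abs_gaussianReal 0 1)]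
  have h0 : gaussianReal 0 1 {0} = 0 :=
    gaussianReal_absolutelyContinuous 0 one_ne_zero Real.volume_singleton
  have h1 : gaussianReal 0 1 {0}ᶜ = 1 := (prob_compl_eq_one_iff (measurableSet_singleton 0)).mpr h0
  have hsupp : Function.support (fun x : ℝ ↦ |x|) = {0}ᶜ := by ext; simp
  rw [hsupp, h1]
  exact one_pos

section RandomVariable

variable {Ω : Type*} [MeasurableSpace Ω] {P : Measure Ω} {X : Ω → ℝ} {μ : ℝ} {v : ℝ≥0}

lemma integrable_abs_of_map_eq_gaussianReal (hX : P.map X = gaussianReal μ v) :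
    Integrable (fun ω ↦ |X ω|) P := by
  have hXm : AEMeasurable X P := AEMeasurable.of_map_ne_zero (by simp [hX, NeZero.ne])
  exact (integrable_map_measure (by fun_prop) hXm).mp (hX ▸ integrable_abs_gaussianReal μ v)

lemma integral_abs_of_map_eq_gaussianReal (hX : P.map X = gaussianReal 0 v) :
    ∫ ω, |X ω| ∂P = NNReal.sqrt v * ∫ x, |x| ∂gaussianReal 0 1 := by
  have hXm : AEMeasurable X P := AEMeasurable.of_map_ne_zero (by simp [hX, NeZero.ne])
  rw [← integral_abs_gaussianReal_zero, ← hX, integral_map hXm (by fun_prop)]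

end RandomVariable

end ProbabilityTheory

lemma two_mul_lt_add_sq_div {t s : ℝ} (hs : 0 < s) (hts : t ≠ s) : 2 * t < s + t ^ 2 / s := by
  have hpos : 0 < (s - t) ^ 2 / s := div_pos (sq_pos_of_ne_zero (sub_ne_zero.mpr hts.symm)) hs
  have hexpand : (s - t) ^ 2 / s = s + t ^ 2 / s - 2 * t := by field_simp; ring
  linarith

theorem mean_bias_of_b_gt_mean_bias_of_bstar_general {Ω : Type*} [MeasurableSpace Ω]
    (P : Measure Ω) (β ε b bstar : Ω → ℝ) (τ se : ℝ)
    (hτ : 0 < τ) (hse : 0 < se)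
    (hβ : Measure.map β P = gaussianReal 0 (Real.toNNReal (τ ^ 2)))
    (hε : Measure.map ε P = gaussianReal 0 (Real.toNNReal (se ^ 2)))
    (hind : IndepFun β ε P)
    (hb : ∀ ω, b ω = β ω + ε ω)
    (hbstar : ∀ ω, bstar ω = τ ^ 2 * b ω / (se ^ 2 + τ ^ 2)) :
    (∫ ω, (|β ω| - |bstar ω|) ∂P) < ∫ ω, (|b ω| - |β ω|) ∂P := by
  set s := √(τ ^ 2 + se ^ 2)
  set c := ∫ x, |x| ∂gaussianReal 0 1
  have hb_law : P.map b = gaussianReal 0 ((τ ^ 2).toNNReal + (se ^ 2).toNNReal) := by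
    rw [show b = β + ε from funext hb, gaussianReal_add_gaussianReal_of_indepFun hind hβ hε,
      add_zero]
  have hβ_mean : ∫ ω, |β ω| ∂P = τ * c := by
    rw [integral_abs_of_map_eq_gaussianReal hβ, Real.coe_sqrt,
      Real.coe_toNNReal _ (sq_nonneg τ), Real.sqrt_sq hτ.le]
  have hb_mean : ∫ ω, |b ω| ∂P = s * c := by
    rw [integral_abs_of_map_eq_gaussianReal hb_law, Real.coe_sqrt, NNReal.coe_add,
      Real.coe_toNNReal _ (sq_nonneg τ), Real.coe_toNNReal _ (sq_nonneg se)]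
  have hbstar_abs : ∀ ω, |bstar ω| = τ ^ 2 / (se ^ 2 + τ ^ 2) * |b ω| := by
    intro ω
    rw [hbstar ω, abs_div, abs_mul, abs_of_pos (by positivity : (0:ℝ) < se ^ 2 + τ ^ 2), abs_sq]
    ring
  have hβ_int := integrable_abs_of_map_eq_gaussianReal hβ
  have hb_int := integrable_abs_of_map_eq_gaussianReal hb_law
  have hbstar_int : Integrable (fun ω ↦ |bstar ω|) P := by
    simpa only [hbstar_abs] using hb_int.const_mul (τ ^ 2 / (se ^ 2 + τ ^ 2))
  have hs_sq : s ^ 2 = se ^ 2 + τ ^ 2 := by rw [Real.sq_sqrt (by positivity)]; ring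
  have hτs : τ < s := Real.lt_sqrt_of_sq_lt (lt_add_of_pos_right _ (by positivity))
  have hbstar_mean : ∫ ω, |bstar ω| ∂P = τ ^ 2 / s * c := by
    simp only [hbstar_abs]
    rw [integral_const_mul, hb_mean, ← hs_sq]
    field_simp
  rw [integral_sub hβ_int hbstar_int, integral_sub hb_int hβ_int, hβ_mean, hb_mean, hbstar_mean]
  have hgap := mul_lt_mul_of_pos_right (two_mul_lt_add_sq_div (hτ.trans hτs) hτs.ne)
    integral_abs_stdGaussian_pos
  linarith

/-- Hierarchical normal model: `β ~ N(0, τ²)` and, given `β`, `b = β + ε ~ N(β, se²)`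
with `ε ~ N(0, se²)` independent of `β`; let `b* = τ²·b/(se² + τ²)`.  Then
`E(|b| − |β|) > E(|β| − |b*|)`. -/
theorem mean_bias_of_b_gt_mean_bias_of_bstar {Ω : Type*} [MeasurableSpace Ω]
    (P : Measure Ω) [IsProbabilityMeasure P] (β ε b bstar : Ω → ℝ) (τ se : ℝ)
    (hτ : 0 < τ) (hse : 0 < se)
    (hβ : Measure.map β P = gaussianReal 0 (Real.toNNReal (τ ^ 2)))
    (hε : Measure.map ε P = gaussianReal 0 (Real.toNNReal (se ^ 2)))
    (hind : IndepFun β ε P)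
    (hb : ∀ ω, b ω = β ω + ε ω)
    (hbstar : ∀ ω, bstar ω = τ ^ 2 * b ω / (se ^ 2 + τ ^ 2)) :
    (∫ ω, (|β ω| - |bstar ω|) ∂P) < ∫ ω, (|b ω| - |β ω|) ∂P :=
  mean_bias_of_b_gt_mean_bias_of_bstar_general P β ε b bstar τ se hτ hse hβ hε hind hb hbstar
end
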